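/- Let A > 0 and suppose every block privacy level satisfies 0 < α_ℓ ≤ A. Let Z = (Z_j)_{j∈𝒥} ∼ Q₁(·|X) be generated by the Coordinate block privacy mechanism. Then for every block ℓ ∈ 𝓛 and every j ∈ 𝒥_ℓ, almost surely |Z_j| ≤ 2 ξ_A B₀ √(d_ℓ)/α_ℓ, and consequently Var(Z_j) ≤ (2 ξ_A B₀)² d_ℓ / α_ℓ², where ξ_A = A(e^A + 1)/(e^A − 1). -/

import Mathlib

open MeasureTheory ProbabilityTheory Real
open scoped BigOperators ENNReal

noncomputable section

/-- `Γ_k = 2^{k-1} / C(k-1, ⌊(k-1)/2⌋)`. -/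
noncomputable def Gam (k : ℕ) : ℝ := 2 ^ (k - 1) / (Nat.choose (k - 1) ((k - 1) / 2) : ℝ)

/-- `B_k(a) = B₀ Γ_k (e^a+1)/(e^a-1)`. -/
noncomputable def Bk (B₀ : ℝ) (k : ℕ) (a : ℝ) : ℝ :=
  B₀ * ((Real.exp a + 1) / (Real.exp a - 1)) * Gam k

/-- `ξ_A = A (e^A+1)/(e^A-1)`. -/
noncomputable def xiA (A : ℝ) : ℝ := A * (Real.exp A + 1) / (Real.exp A - 1)

section Mechanism

variable {𝒳 : Type*} [MeasurableSpace 𝒳]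
variable {𝒥 𝓛 : Type*} [Fintype 𝒥] [DecidableEq 𝒥] [Fintype 𝓛] [DecidableEq 𝓛]

/-- The block of indices with label `ℓ`. -/
def BlkT (blk : 𝒥 → 𝓛) (ℓ : 𝓛) : Type _ := {j : 𝒥 // blk j = ℓ}

instance (blk : 𝒥 → 𝓛) (ℓ : 𝓛) : Fintype (BlkT blk ℓ) :=
  Subtype.fintype _

instance (blk : 𝒥 → 𝓛) (ℓ : 𝓛) : DecidableEq (BlkT blk ℓ) :=
  Subtype.instDecidableEq

/-- `d_ℓ`, the cardinality of block `ℓ`. -/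
noncomputable def dl (blk : 𝒥 → 𝓛) (ℓ : 𝓛) : ℕ := Fintype.card (BlkT blk ℓ)

/-- sign vector to real vector with magnitude `c`. -/
def signVal (c : ℝ) (b : Bool) : ℝ := if b then c else -c

variable (blk : 𝒥 → 𝓛) (αl : 𝓛 → ℝ) (B₀ : ℝ)

/-- Magnitude of the output coordinates in block `ℓ`. -/
noncomputable def Bval (ℓ : 𝓛) : ℝ := Bk B₀ (dl blk ℓ) (αl ℓ)

/-- Inner product `⟨z, ṽ⟩` over block `ℓ`, where `σ` (resp. `τ`) is the sign
vector of `z ∈ {±B_{d_ℓ}(α_ℓ)}^{d_ℓ}` (resp. of `ṽ ∈ {±B₀}^{d_ℓ}`). -/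
noncomputable def ipZ (ℓ : 𝓛) (σ τ : BlkT blk ℓ → Bool) : ℝ :=
  ∑ j : BlkT blk ℓ, signVal (Bval blk αl B₀ ℓ) (σ j) * signVal B₀ (τ j)

open scoped Classical in
/-- `|{z : ⟨z,ṽ⟩ > 0}|`. -/
noncomputable def DplusCard (ℓ : 𝓛) (τ : BlkT blk ℓ → Bool) : ℕ :=
  (Finset.univ.filter fun σ : BlkT blk ℓ → Bool => 0 < ipZ blk αl B₀ ℓ σ τ).card

open scoped Classical in
/-- `|{z : ⟨z,ṽ⟩ < 0}|`. -/
noncomputable def DminusCard (ℓ : 𝓛) (τ : BlkT blk ℓ → Bool) : ℕ :=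
  (Finset.univ.filter fun σ : BlkT blk ℓ → Bool => ipZ blk αl B₀ ℓ σ τ < 0).card

open scoped Classical in
/-- `|{z : ⟨z,ṽ⟩ = 0}|`. -/
noncomputable def DzeroCard (ℓ : 𝓛) (τ : BlkT blk ℓ → Bool) : ℕ :=
  (Finset.univ.filter fun σ : BlkT blk ℓ → Bool => ipZ blk αl B₀ ℓ σ τ = 0).card

/-- `p_ℓ`: probability that `Y_ℓ = 1`. -/
noncomputable def pl (ℓ : 𝓛) : ℝ :=
  if dl blk ℓ % 2 = 1 then 1
  else 1 - (Nat.choose (dl blk ℓ) (dl blk ℓ / 2) : ℝ) / 2 ^ dl blk ℓ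

/-- `π_{α_ℓ} = e^{α_ℓ}/(1+e^{α_ℓ})`. -/
noncomputable def pil (ℓ : 𝓛) : ℝ := Real.exp (αl ℓ) / (1 + Real.exp (αl ℓ))

/-- Conditional probability `P(Z_{[ℓ]} = z | Ṽ_{[ℓ]} = ṽ)` (as a function of the
sign vectors `σ` of `z` and `τ` of `ṽ`): with probability `p_ℓ`, draw
`T_ℓ ∼ B(π_{α_ℓ})` and pick `z` uniformly on `{⟨z,ṽ⟩ > 0}` if `T_ℓ = 1`,
uniformly on `{⟨z,ṽ⟩ < 0}` if `T_ℓ = 0`; with probability `1 - p_ℓ` pick `z`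
uniformly on `{⟨z,ṽ⟩ = 0}`. -/
noncomputable def condP (ℓ : 𝓛) (τ σ : BlkT blk ℓ → Bool) : ℝ :=
  pl blk ℓ * (pil αl ℓ *
      (if 0 < ipZ blk αl B₀ ℓ σ τ then ((DplusCard blk αl B₀ ℓ τ : ℝ))⁻¹ else 0)
    + (1 - pil αl ℓ) *
      (if ipZ blk αl B₀ ℓ σ τ < 0 then ((DminusCard blk αl B₀ ℓ τ : ℝ))⁻¹ else 0))
  + (1 - pl blk ℓ) *
      (if ipZ blk αl B₀ ℓ σ τ = 0 then ((DzeroCard blk αl B₀ ℓ τ : ℝ))⁻¹ else 0)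

variable (φ : 𝒥 → 𝒳 → ℝ)

/-- `P(Ṽ_{[ℓ]} = ṽ | X = x)`: independent coordinates, `Ṽ_j = B₀` with
probability `1/2 + φ_j(x)/(2B₀)` and `-B₀` otherwise. -/
noncomputable def vP (x : 𝒳) (ℓ : 𝓛) (τ : BlkT blk ℓ → Bool) : ℝ :=
  ∏ j : BlkT blk ℓ,
    (if τ j then 1/2 + φ j.1 x / (2 * B₀) else 1/2 - φ j.1 x / (2 * B₀))

/-- `P(Z_{[ℓ]} = z | X = x)` for the block `ℓ`. -/
noncomputable def blockP (x : 𝒳) (ℓ : 𝓛) (σ : BlkT blk ℓ → Bool) : ℝ :=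
  ∑ τ : BlkT blk ℓ → Bool, vP blk B₀ φ x ℓ τ * condP blk αl B₀ ℓ τ σ

/-- Probability of the full output sign vector `σ` given `X = x` (blocks are
drawn independently). -/
noncomputable def mechP (x : 𝒳) (σ : 𝒥 → Bool) : ℝ :=
  ∏ ℓ : 𝓛, blockP blk αl B₀ φ x ℓ (fun j => σ j.1)

/-- Output vector associated with a sign vector. -/
noncomputable def zOf (σ : 𝒥 → Bool) : 𝒥 → ℝ :=
  fun j => signVal (Bval blk αl B₀ (blk j)) (σ j)

/-- The Coordinate block privacy mechanism `Q₁`: the conditional distribution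
of the private view `Z = (Z_j)_{j ∈ 𝒥} ∈ ∏_ℓ {±B_{d_ℓ}(α_ℓ)}^{d_ℓ}` given `X = x`. -/
noncomputable def mechQ (x : 𝒳) : Measure (𝒥 → ℝ) :=
  ∑ σ : 𝒥 → Bool, ENNReal.ofReal (mechP blk αl B₀ φ x σ) • Measure.dirac (zOf blk αl B₀ σ)

end Mechanism

end

-- ======================= auxiliary lemmas =======================

section AuxMath

lemma CB.central_pos (n : ℕ) : 0 < Nat.choose n (n/2) := Nat.choose_pos (Nat.div_le_self n 2)

lemma CB.aux_even_poly (m : ℕ) : 16*(2*(2*m)+1)*(m+1)^2 ≤ (2*(2*m+2)+1)*(4*(2*m+1)^2) := by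
  nlinarith

lemma CB.aux_odd_poly (m : ℕ) : 16*(2*(2*m+1)+2)*(m+2)^2 ≤ (2*(2*m+3)+2)*(4*(2*m+3)^2) := by
  nlinarith

lemma CB.four_pow_le_central (n : ℕ) : 4^n ≤ (2*n + 1 + n % 2) * (Nat.choose n (n/2))^2 := by
  induction n using Nat.strong_induction_on with
  | _ n ih =>
    match n with
    | 0 => norm_num
    | 1 => norm_num
    | (n+2) =>
      have IH := ih n (by omega)
      rcases Nat.even_or_odd n with ⟨m, hm⟩ | ⟨m, hm⟩
      · have hm' : n = 2*m := by omega
        subst hm'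
        have hd1 : (2*m) / 2 = m := by omega
        have hd2 : (2*m + 2) / 2 = m + 1 := by omega
        have hmod : (2*m) % 2 = 0 := by omega
        have hmod2 : (2*m+2) % 2 = 0 := by omega
        rw [hd2, hmod2]
        rw [hd1, hmod] at IH
        set C0 := Nat.choose (2*m) m with hC0
        set C2 := Nat.choose (2*m+2) (m+1) with hC2
        have h1 : (2*m+1) * C0 = Nat.choose (2*m+1) (m+1) * (m+1) := by
          simpa using Nat.add_one_mul_choose_eq (2*m) m
        have h2 : Nat.choose (2*m+1) m = Nat.choose (2*m+1) (m+1) := by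
          have := Nat.choose_symm (show m+1 ≤ 2*m+1 by omega)
          rw [show 2*m+1-(m+1) = m by omega] at this
          exact this
        have h3 : (2*m+2) * Nat.choose (2*m+1) m = C2 * (m+1) := by
          simpa using Nat.add_one_mul_choose_eq (2*m+1) m
        have key : C2 * (m+1) = 2*(2*m+1) * C0 := by
          have e1 : C2 * (m+1) * (m+1) = 2*(2*m+1) * C0 * (m+1) := by
            calc C2 * (m+1) * (m+1) = ((2*m+2) * Nat.choose (2*m+1) m) * (m+1) := by rw [h3]
              _ = (2*(m+1)) * (Nat.choose (2*m+1) (m+1) * (m+1)) := by rw [h2]; ring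
              _ = (2*(m+1)) * ((2*m+1) * C0) := by rw [← h1]
              _ = 2*(2*m+1) * C0 * (m+1) := by ring
          exact Nat.eq_of_mul_eq_mul_right (by omega) e1
        have e2 : C2^2 * (m+1)^2 = 4*(2*m+1)^2*C0^2 := by
          rw [← mul_pow, key]; ring
        have hcancel : 4^(2*m+2) * (m+1)^2 ≤ ((2*(2*m+2) + 1 + 0) * C2^2) * (m+1)^2 := by
          calc 4^(2*m+2) * (m+1)^2 = (16 * 4^(2*m)) * (m+1)^2 := by ring
            _ ≤ (16 * ((2*(2*m)+1+0) * C0^2)) * (m+1)^2 :=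
                Nat.mul_le_mul_right _ (Nat.mul_le_mul_left 16 IH)
            _ = (16*(2*(2*m)+1)*(m+1)^2) * C0^2 := by ring
            _ ≤ ((2*(2*m+2)+1)*(4*(2*m+1)^2)) * C0^2 := Nat.mul_le_mul_right _ (CB.aux_even_poly m)
            _ = (2*(2*m+2)+1) * (4*(2*m+1)^2*C0^2) := by ring
            _ = (2*(2*m+2)+1) * (C2^2 * (m+1)^2) := by rw [e2]
            _ = ((2*(2*m+2) + 1 + 0) * C2^2) * (m+1)^2 := by ring
        exact Nat.le_of_mul_le_mul_right hcancel (by positivity)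
      · have hm' : n = 2*m+1 := by omega
        subst hm'
        have hd1 : (2*m+1) / 2 = m := by omega
        have hd2 : (2*m+1+2) / 2 = m + 1 := by omega
        have hmod : (2*m+1) % 2 = 1 := by omega
        have hmod2 : (2*m+1+2) % 2 = 1 := by omega
        rw [hd2, hmod2]
        rw [hd1, hmod] at IH
        set C0 := Nat.choose (2*m+1) m with hC0
        set C2 := Nat.choose (2*m+1+2) (m+1) with hC2
        have h2 : Nat.choose (2*m+2) (m+1) = 2 * C0 := by
          have hp : Nat.choose (2*m+2) (m+1) = Nat.choose (2*m+1) m + Nat.choose (2*m+1) (m+1) :=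
            Nat.choose_succ_succ (2*m+1) m
          have hs : Nat.choose (2*m+1) m = Nat.choose (2*m+1) (m+1) := by
            have := Nat.choose_symm (show m+1 ≤ 2*m+1 by omega)
            rw [show 2*m+1-(m+1) = m by omega] at this
            exact this
          omega
        have h3 : (2*m+3) * Nat.choose (2*m+2) (m+1) = Nat.choose (2*m+3) (m+2) * (m+2) := by
          simpa using Nat.add_one_mul_choose_eq (2*m+2) (m+1)
        have h4 : Nat.choose (2*m+3) (m+2) = C2 := by
          have := Nat.choose_symm (show m+2 ≤ 2*m+3 by omega)
          rw [show 2*m+3-(m+2) = m+1 by omega] at this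
          rw [hC2, show 2*m+1+2 = 2*m+3 by omega]
          exact this.symm
        have key : C2 * (m+2) = 2*(2*m+3) * C0 := by
          rw [← h4, ← h3, h2]; ring
        have e2 : C2^2 * (m+2)^2 = 4*(2*m+3)^2*C0^2 := by
          rw [← mul_pow, key]; ring
        have hcancel : 4^(2*m+1+2) * (m+2)^2 ≤ ((2*(2*m+1+2) + 1 + 1) * C2^2) * (m+2)^2 := by
          calc 4^(2*m+1+2) * (m+2)^2 = (16 * 4^(2*m+1)) * (m+2)^2 := by ring
            _ ≤ (16 * ((2*(2*m+1)+1+1) * C0^2)) * (m+2)^2 :=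
                Nat.mul_le_mul_right _ (Nat.mul_le_mul_left 16 IH)
            _ = (16*(2*(2*m+1)+2)*(m+2)^2) * C0^2 := by ring
            _ ≤ ((2*(2*m+3)+2)*(4*(2*m+3)^2)) * C0^2 := Nat.mul_le_mul_right _ (CB.aux_odd_poly m)
            _ = (2*(2*m+3)+2) * (4*(2*m+3)^2*C0^2) := by ring
            _ = (2*(2*m+3)+2) * (C2^2 * (m+2)^2) := by rw [e2]
            _ = ((2*(2*m+1+2) + 1 + 1) * C2^2) * (m+2)^2 := by ring
        exact Nat.le_of_mul_le_mul_right hcancel (by positivity)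

lemma CB.Gam_pos (k : ℕ) : 0 < Gam k := by
  unfold Gam
  have h0 := CB.central_pos (k-1)
  have : (0:ℝ) < (Nat.choose (k-1) ((k-1)/2) : ℝ) := by exact_mod_cast h0
  positivity

lemma CB.Gam_le (k : ℕ) (hk : 1 ≤ k) : Gam k ≤ 2 * Real.sqrt k := by
  set n := k - 1 with hn
  have hk' : (n : ℝ) + 1 = (k : ℝ) := by
    have : n + 1 = k := by omega
    exact_mod_cast this
  have hc : (0:ℝ) < (Nat.choose n (n/2) : ℝ) := by exact_mod_cast CB.central_pos n
  have hsq : Gam k ^ 2 ≤ 4 * k := by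
    have h1 : (4:ℝ)^n ≤ (2*n + 2) * (Nat.choose n (n/2) : ℝ)^2 := by
      have h0 := CB.four_pow_le_central n
      have h2 : (4:ℝ)^n ≤ ((2*n + 1 + n % 2 : ℕ) : ℝ) * (Nat.choose n (n/2) : ℝ)^2 := by
        exact_mod_cast h0
      refine h2.trans ?_
      have h3 : ((2*n + 1 + n % 2 : ℕ) : ℝ) ≤ 2*n + 2 := by
        have : 2*n + 1 + n % 2 ≤ 2*n+2 := by omega
        exact_mod_cast this
      nlinarith [sq_nonneg ((Nat.choose n (n/2) : ℝ))]
    have hG : Gam k ^ 2 = (4:ℝ)^n / (Nat.choose n (n/2) : ℝ)^2 := by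
      unfold Gam
      rw [div_pow, ← hn]
      congr 1
      rw [← pow_mul, mul_comm n 2, pow_mul]
      norm_num
    rw [hG, div_le_iff₀ (by positivity)]
    calc (4:ℝ)^n ≤ (2*n + 2) * (Nat.choose n (n/2) : ℝ)^2 := h1
      _ ≤ (4 * k) * (Nat.choose n (n/2) : ℝ)^2 := by
          nlinarith [sq_nonneg ((Nat.choose n (n/2) : ℝ)), hk', hc]
  have h4 : Gam k ≤ Real.sqrt (4 * k) := by
    rw [Real.le_sqrt (CB.Gam_pos k).le (by positivity)]
    exact hsq
  calc Gam k ≤ Real.sqrt (4 * k) := h4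
    _ = 2 * Real.sqrt k := by
        rw [Real.sqrt_mul (by norm_num) (k:ℝ), show (4:ℝ) = 2^2 by norm_num,
          Real.sqrt_sq (by norm_num)]

lemma CB.exp_sub_one_pos {x : ℝ} (hx : 0 < x) : 0 < Real.exp x - 1 := by
  have : (1:ℝ) < Real.exp x := by
    rw [← Real.exp_zero]; exact Real.exp_lt_exp.mpr hx
  linarith

lemma CB.fmono {a b : ℝ} (ha : 0 < a) (hab : a ≤ b) :
    a * (Real.exp a + 1) / (Real.exp a - 1) ≤ b * (Real.exp b + 1) / (Real.exp b - 1) := by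
  set f : ℝ → ℝ := fun x => x * (Real.exp x + 1) / (Real.exp x - 1) with hf
  have key : ∀ x : ℝ, 0 < x → HasDerivAt f
      (((1 * (Real.exp x + 1) + x * Real.exp x) * (Real.exp x - 1)
        - (x * (Real.exp x + 1)) * Real.exp x) / (Real.exp x - 1)^2) x := by
    intro x hx
    have hne : Real.exp x - 1 ≠ 0 := (CB.exp_sub_one_pos hx).ne'
    have hu : HasDerivAt (fun x : ℝ => x * (Real.exp x + 1))
        (1 * (Real.exp x + 1) + x * Real.exp x) x :=
      (hasDerivAt_id x).mul ((Real.hasDerivAt_exp x).add_const 1)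
    have hv : HasDerivAt (fun x : ℝ => Real.exp x - 1) (Real.exp x) x :=
      (Real.hasDerivAt_exp x).sub_const 1
    exact hu.div hv hne
  have hmono : MonotoneOn f (Set.Ici a) := by
    apply monotoneOn_of_deriv_nonneg (convex_Ici a)
    · intro x hx
      exact ((key x (lt_of_lt_of_le ha hx)).continuousAt).continuousWithinAt
    · intro x hx
      rw [interior_Ici] at hx
      exact ((key x (ha.trans hx)).differentiableAt).differentiableWithinAt
    · intro x hx
      rw [interior_Ici] at hx
      have hx' : 0 < x := ha.trans hx
      rw [(key x hx').deriv]
      apply div_nonneg _ (sq_nonneg _)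
      have hs : x ≤ Real.sinh x := Real.self_le_sinh_iff.mpr hx'.le
      rw [Real.sinh_eq] at hs
      have hexp : Real.exp (-x) = (Real.exp x)⁻¹ := Real.exp_neg x
      have hpos : 0 < Real.exp x := Real.exp_pos x
      rw [hexp] at hs
      have h2 : 2 * x * Real.exp x ≤ Real.exp x * Real.exp x - 1 := by
        calc 2 * x * Real.exp x = (x * 2) * Real.exp x := by ring
          _ ≤ ((Real.exp x - (Real.exp x)⁻¹)/2 * 2) * Real.exp x := by
              apply mul_le_mul_of_nonneg_right _ hpos.le
              linarith
          _ = Real.exp x * Real.exp x - (Real.exp x)⁻¹ * Real.exp x := by ring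
          _ = Real.exp x * Real.exp x - 1 := by rw [inv_mul_cancel₀ hpos.ne']
      nlinarith
  have h1 : f a ≤ f b := hmono (Set.self_mem_Ici) hab hab
  simpa [hf] using h1

lemma CB.xiA_pos {A : ℝ} (hA : 0 < A) : 0 < xiA A := by
  unfold xiA
  have h1 := CB.exp_sub_one_pos hA
  have h2 := Real.exp_pos A
  positivity

lemma CB.frac_le {α A : ℝ} (hα : 0 < α) (hαA : α ≤ A) :
    (Real.exp α + 1) / (Real.exp α - 1) ≤ xiA A / α := by
  rw [le_div_iff₀ hα]
  calc (Real.exp α + 1) / (Real.exp α - 1) * α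
      = α * (Real.exp α + 1) / (Real.exp α - 1) := by ring
    _ ≤ A * (Real.exp A + 1) / (Real.exp A - 1) := CB.fmono hα hαA
    _ = xiA A := rfl

lemma CB.Bk_le {B₀ α A : ℝ} {d : ℕ} (hB₀ : 0 < B₀) (hα : 0 < α) (hαA : α ≤ A) (hd : 1 ≤ d) :
    Bk B₀ d α ≤ 2 * xiA A * B₀ * Real.sqrt d / α := by
  have hA : 0 < A := lt_of_lt_of_le hα hαA
  have h1 : Bk B₀ d α ≤ B₀ * (xiA A / α) * (2 * Real.sqrt d) := by
    unfold Bk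
    have g1 := CB.Gam_le d hd
    have g2 := (CB.Gam_pos d).le
    have h2 := CB.frac_le hα hαA
    have hx := (CB.xiA_pos hA).le
    calc B₀ * ((Real.exp α + 1) / (Real.exp α - 1)) * Gam d
        ≤ B₀ * (xiA A / α) * Gam d := by
          apply mul_le_mul_of_nonneg_right _ g2
          exact mul_le_mul_of_nonneg_left h2 hB₀.le
      _ ≤ B₀ * (xiA A / α) * (2 * Real.sqrt d) := by
          apply mul_le_mul_of_nonneg_left g1
          positivity
  calc Bk B₀ d α ≤ B₀ * (xiA A / α) * (2 * Real.sqrt d) := h1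
    _ = 2 * xiA A * B₀ * Real.sqrt d / α := by ring

lemma CB.Bk_pos {B₀ α : ℝ} {d : ℕ} (hB₀ : 0 < B₀) (hα : 0 < α) : 0 < Bk B₀ d α := by
  unfold Bk
  have h1 := CB.exp_sub_one_pos hα
  have h2 := Real.exp_pos α
  have h3 := CB.Gam_pos d
  positivity

lemma CB.choose_le_two_pow (n k : ℕ) : Nat.choose n k ≤ 2^n := by
  rcases le_or_gt k n with h | h
  · calc Nat.choose n k ≤ ∑ i ∈ Finset.range (n+1), Nat.choose n i :=
        Finset.single_le_sum (fun _ _ => Nat.zero_le _) (Finset.mem_range.mpr (by omega))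
      _ = 2^n := Nat.sum_range_choose n
  · simp [Nat.choose_eq_zero_of_lt h]

end AuxMath

noncomputable section MechLemmas

variable {𝒳 : Type*} [MeasurableSpace 𝒳]
variable {𝒥 𝓛 : Type*} [Fintype 𝒥] [DecidableEq 𝒥] [Fintype 𝓛] [DecidableEq 𝓛]
variable (blk : 𝒥 → 𝓛) (αl : 𝓛 → ℝ) (B₀ : ℝ) (φ : 𝒥 → 𝒳 → ℝ)

lemma CB.sum_ite_card {ι : Type*} [Fintype ι] (P : ι → Prop) [DecidablePred P] (c : ℝ) :
    ∑ σ : ι, (if P σ then c else 0) = ((Finset.univ.filter P).card : ℝ) * c := by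
  rw [Finset.sum_ite, Finset.sum_const, Finset.sum_const_zero, add_zero, nsmul_eq_mul]

lemma CB.ip_eq (ℓ : 𝓛) (σ τ : BlkT blk ℓ → Bool) :
    ipZ blk αl B₀ ℓ σ τ = ∑ j : BlkT blk ℓ,
      (if σ j = τ j then Bval blk αl B₀ ℓ * B₀ else -(Bval blk αl B₀ ℓ * B₀)) := by
  unfold ipZ
  refine Finset.sum_congr rfl fun j _ => ?_
  cases hσ : σ j <;> cases hτ : τ j <;> simp [signVal] <;> ring

lemma CB.Dplus_pos (ℓ : 𝓛) (τ : BlkT blk ℓ → Bool) (hB₀ : 0 < B₀) (hα : 0 < αl ℓ)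
    (hd : 1 ≤ dl blk ℓ) : 0 < DplusCard blk αl B₀ ℓ τ := by
  have hBv : 0 < Bval blk αl B₀ ℓ := CB.Bk_pos hB₀ hα
  apply Finset.card_pos.mpr
  refine ⟨τ, Finset.mem_filter.mpr ⟨Finset.mem_univ _, ?_⟩⟩
  rw [CB.ip_eq]
  have hall : ∀ j : BlkT blk ℓ, (if τ j = τ j then Bval blk αl B₀ ℓ * B₀
      else -(Bval blk αl B₀ ℓ * B₀)) = Bval blk αl B₀ ℓ * B₀ := fun j => if_pos rfl
  rw [Finset.sum_congr rfl fun j _ => hall j, Finset.sum_const, Finset.card_univ, nsmul_eq_mul]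
  have hd' : (0:ℝ) < (Fintype.card (BlkT blk ℓ) : ℝ) := by
    have : 0 < Fintype.card (BlkT blk ℓ) := hd
    exact_mod_cast this
  positivity

lemma CB.Dminus_pos (ℓ : 𝓛) (τ : BlkT blk ℓ → Bool) (hB₀ : 0 < B₀) (hα : 0 < αl ℓ)
    (hd : 1 ≤ dl blk ℓ) : 0 < DminusCard blk αl B₀ ℓ τ := by
  have hBv : 0 < Bval blk αl B₀ ℓ := CB.Bk_pos hB₀ hα
  apply Finset.card_pos.mpr
  refine ⟨fun j => !τ j, Finset.mem_filter.mpr ⟨Finset.mem_univ _, ?_⟩⟩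
  rw [CB.ip_eq]
  have hne : ∀ j : BlkT blk ℓ, ((!τ j) = τ j) = False := by
    intro j; simp
  simp only [hne, if_false]
  rw [Finset.sum_const, Finset.card_univ, nsmul_eq_mul]
  have hd' : (0:ℝ) < (Fintype.card (BlkT blk ℓ) : ℝ) := by
    have : 0 < Fintype.card (BlkT blk ℓ) := hd
    exact_mod_cast this
  nlinarith [mul_pos hBv hB₀]

lemma CB.Dzero_pos (ℓ : 𝓛) (τ : BlkT blk ℓ → Bool) (heven : dl blk ℓ % 2 = 0) :
    0 < DzeroCard blk αl B₀ ℓ τ := by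
  classical
  obtain ⟨S, -, hS⟩ := Finset.exists_subset_card_eq
    (show dl blk ℓ / 2 ≤ (Finset.univ : Finset (BlkT blk ℓ)).card by
      rw [Finset.card_univ]; exact Nat.div_le_self _ _)
  apply Finset.card_pos.mpr
  refine ⟨fun j => if j ∈ S then τ j else !τ j, Finset.mem_filter.mpr ⟨Finset.mem_univ _, ?_⟩⟩
  rw [CB.ip_eq]
  have hterm : ∀ j : BlkT blk ℓ,
      (if (if j ∈ S then τ j else !τ j) = τ j then Bval blk αl B₀ ℓ * B₀
        else -(Bval blk αl B₀ ℓ * B₀))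
      = (if j ∈ S then Bval blk αl B₀ ℓ * B₀ else -(Bval blk αl B₀ ℓ * B₀)) := by
    intro j
    by_cases hj : j ∈ S <;> simp [hj]
  rw [Finset.sum_congr rfl fun j _ => hterm j]
  rw [Finset.sum_ite, Finset.sum_const, Finset.sum_const, Finset.filter_mem_eq_inter,
    Finset.univ_inter, Finset.filter_not, Finset.filter_mem_eq_inter, Finset.univ_inter,
    Finset.card_sdiff_of_subset (Finset.subset_univ S), Finset.card_univ, hS]
  have hcards : Fintype.card (BlkT blk ℓ) - dl blk ℓ / 2 = dl blk ℓ / 2 := by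
    unfold dl at heven ⊢; omega
  rw [hcards]
  push_cast
  ring

lemma CB.pl_nonneg (ℓ : 𝓛) : 0 ≤ pl blk ℓ := by
  unfold pl
  split
  · norm_num
  · have h1 : (Nat.choose (dl blk ℓ) (dl blk ℓ / 2) : ℝ) ≤ 2 ^ dl blk ℓ := by
      exact_mod_cast CB.choose_le_two_pow (dl blk ℓ) (dl blk ℓ / 2)
    have h2 : (0:ℝ) < 2 ^ dl blk ℓ := by positivity
    have := div_le_one_of_le₀ h1 h2.le
    linarith

lemma CB.pl_le_one (ℓ : 𝓛) : pl blk ℓ ≤ 1 := by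
  unfold pl
  split
  · norm_num
  · have h2 : (0:ℝ) ≤ (Nat.choose (dl blk ℓ) (dl blk ℓ / 2) : ℝ) / 2 ^ dl blk ℓ := by positivity
    linarith

lemma CB.pil_nonneg (ℓ : 𝓛) : 0 ≤ pil αl ℓ := by
  unfold pil
  have := Real.exp_pos (αl ℓ)
  positivity

lemma CB.pil_le_one (ℓ : 𝓛) : pil αl ℓ ≤ 1 := by
  unfold pil
  have := Real.exp_pos (αl ℓ)
  rw [div_le_one (by positivity)]
  linarith

lemma CB.condP_nonneg (ℓ : 𝓛) (τ σ : BlkT blk ℓ → Bool) : 0 ≤ condP blk αl B₀ ℓ τ σ := by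
  unfold condP
  have h1 := CB.pl_nonneg blk ℓ
  have h2 := CB.pl_le_one blk ℓ
  have h3 := CB.pil_nonneg αl ℓ
  have h4 := CB.pil_le_one αl ℓ
  have i1 : (0:ℝ) ≤ (if 0 < ipZ blk αl B₀ ℓ σ τ then ((DplusCard blk αl B₀ ℓ τ : ℝ))⁻¹ else 0) := by
    split <;> positivity
  have i2 : (0:ℝ) ≤ (if ipZ blk αl B₀ ℓ σ τ < 0 then ((DminusCard blk αl B₀ ℓ τ : ℝ))⁻¹ else 0) := by
    split <;> positivity
  have i3 : (0:ℝ) ≤ (if ipZ blk αl B₀ ℓ σ τ = 0 then ((DzeroCard blk αl B₀ ℓ τ : ℝ))⁻¹ else 0) := by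
    split <;> positivity
  have := mul_nonneg h3 i1
  have := mul_nonneg (by linarith : (0:ℝ) ≤ 1 - pil αl ℓ) i2
  have := mul_nonneg (by linarith : (0:ℝ) ≤ 1 - pl blk ℓ) i3
  nlinarith

lemma CB.condP_sum (ℓ : 𝓛) (τ : BlkT blk ℓ → Bool) (hB₀ : 0 < B₀) (hα : 0 < αl ℓ)
    (hd : 1 ≤ dl blk ℓ) : ∑ σ : BlkT blk ℓ → Bool, condP blk αl B₀ ℓ τ σ = 1 := by
  unfold condP
  rw [Finset.sum_add_distrib, ← Finset.mul_sum, ← Finset.mul_sum, Finset.sum_add_distrib,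
    ← Finset.mul_sum, ← Finset.mul_sum]
  have hplus : ∑ σ : BlkT blk ℓ → Bool,
      (if 0 < ipZ blk αl B₀ ℓ σ τ then ((DplusCard blk αl B₀ ℓ τ : ℝ))⁻¹ else 0) = 1 := by
    rw [CB.sum_ite_card]
    have hcard : (Finset.univ.filter fun σ : BlkT blk ℓ → Bool =>
        0 < ipZ blk αl B₀ ℓ σ τ).card = DplusCard blk αl B₀ ℓ τ := by
      unfold DplusCard; congr
    rw [hcard]
    exact mul_inv_cancel₀ (by exact_mod_cast (CB.Dplus_pos blk αl B₀ ℓ τ hB₀ hα hd).ne')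
  have hminus : ∑ σ : BlkT blk ℓ → Bool,
      (if ipZ blk αl B₀ ℓ σ τ < 0 then ((DminusCard blk αl B₀ ℓ τ : ℝ))⁻¹ else 0) = 1 := by
    rw [CB.sum_ite_card]
    have hcard : (Finset.univ.filter fun σ : BlkT blk ℓ → Bool =>
        ipZ blk αl B₀ ℓ σ τ < 0).card = DminusCard blk αl B₀ ℓ τ := by
      unfold DminusCard; congr
    rw [hcard]
    exact mul_inv_cancel₀ (by exact_mod_cast (CB.Dminus_pos blk αl B₀ ℓ τ hB₀ hα hd).ne')
  rw [hplus, hminus]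
  rcases Nat.even_or_odd (dl blk ℓ) with he | ho
  · have heven : dl blk ℓ % 2 = 0 := Nat.even_iff.mp he
    have hzero : ∑ σ : BlkT blk ℓ → Bool,
        (if ipZ blk αl B₀ ℓ σ τ = 0 then ((DzeroCard blk αl B₀ ℓ τ : ℝ))⁻¹ else 0) = 1 := by
      rw [CB.sum_ite_card]
      have hcard : (Finset.univ.filter fun σ : BlkT blk ℓ → Bool =>
          ipZ blk αl B₀ ℓ σ τ = 0).card = DzeroCard blk αl B₀ ℓ τ := by
        unfold DzeroCard; congr
      rw [hcard]
      exact mul_inv_cancel₀ (by exact_mod_cast (CB.Dzero_pos blk αl B₀ ℓ τ heven).ne')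
    rw [hzero]
    ring
  · have hodd : dl blk ℓ % 2 = 1 := Nat.odd_iff.mp ho
    have hpl : pl blk ℓ = 1 := by unfold pl; rw [if_pos hodd]
    rw [hpl]
    ring

lemma CB.vP_nonneg (x : 𝒳) (ℓ : 𝓛) (τ : BlkT blk ℓ → Bool) (hB₀ : 0 < B₀)
    (hφ : ∀ j x, |φ j x| ≤ B₀) : 0 ≤ vP blk B₀ φ x ℓ τ := by
  unfold vP
  apply Finset.prod_nonneg
  intro j _
  have habs : |φ j.1 x / (2 * B₀)| ≤ 1/2 := by
    rw [abs_div, abs_of_pos (by positivity : (0:ℝ) < 2 * B₀), div_le_iff₀ (by positivity)]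
    calc |φ j.1 x| ≤ B₀ := hφ j.1 x
      _ = 1/2 * (2 * B₀) := by ring
  have := abs_le.mp habs
  split <;> linarith [this.1, this.2]

lemma CB.vP_sum (x : 𝒳) (ℓ : 𝓛) : ∑ τ : BlkT blk ℓ → Bool, vP blk B₀ φ x ℓ τ = 1 := by
  unfold vP
  have h := Finset.prod_univ_sum (fun _ : BlkT blk ℓ => (Finset.univ : Finset Bool))
    (fun j b => if b then 1/2 + φ j.1 x / (2 * B₀) else 1/2 - φ j.1 x / (2 * B₀))
  rw [Fintype.piFinset_univ] at h
  rw [← h]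
  apply Finset.prod_eq_one
  intro j _
  rw [Fintype.sum_bool]
  norm_num

lemma CB.blockP_nonneg (x : 𝒳) (ℓ : 𝓛) (σ : BlkT blk ℓ → Bool) (hB₀ : 0 < B₀)
    (hφ : ∀ j x, |φ j x| ≤ B₀) : 0 ≤ blockP blk αl B₀ φ x ℓ σ := by
  unfold blockP
  apply Finset.sum_nonneg
  intro τ _
  exact mul_nonneg (CB.vP_nonneg blk B₀ φ x ℓ τ hB₀ hφ) (CB.condP_nonneg blk αl B₀ ℓ τ σ)

lemma CB.blockP_sum (x : 𝒳) (ℓ : 𝓛) (hB₀ : 0 < B₀) (hα : 0 < αl ℓ) (hd : 1 ≤ dl blk ℓ) :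
    ∑ σ : BlkT blk ℓ → Bool, blockP blk αl B₀ φ x ℓ σ = 1 := by
  unfold blockP
  rw [Finset.sum_comm]
  calc ∑ τ : BlkT blk ℓ → Bool, ∑ σ : BlkT blk ℓ → Bool, vP blk B₀ φ x ℓ τ * condP blk αl B₀ ℓ τ σ
      = ∑ τ : BlkT blk ℓ → Bool, vP blk B₀ φ x ℓ τ * ∑ σ : BlkT blk ℓ → Bool, condP blk αl B₀ ℓ τ σ := by
        refine Finset.sum_congr rfl fun τ _ => ?_
        rw [Finset.mul_sum]
    _ = ∑ τ : BlkT blk ℓ → Bool, vP blk B₀ φ x ℓ τ := by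
        refine Finset.sum_congr rfl fun τ _ => ?_
        rw [CB.condP_sum blk αl B₀ ℓ τ hB₀ hα hd, mul_one]
    _ = 1 := CB.vP_sum blk B₀ φ x ℓ

def CB.blockEquiv : (𝒥 → Bool) ≃ (∀ ℓ : 𝓛, BlkT blk ℓ → Bool) where
  toFun := fun σ ℓ j => σ j.1
  invFun := fun F j => F (blk j) ⟨j, rfl⟩
  left_inv := fun σ => rfl
  right_inv := fun F => by
    funext ℓ j
    obtain ⟨j', hj⟩ := j
    subst hj
    rfl

lemma CB.mechP_nonneg (x : 𝒳) (σ : 𝒥 → Bool) (hB₀ : 0 < B₀)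
    (hφ : ∀ j x, |φ j x| ≤ B₀) : 0 ≤ mechP blk αl B₀ φ x σ := by
  unfold mechP
  exact Finset.prod_nonneg fun ℓ _ => CB.blockP_nonneg blk αl B₀ φ x ℓ _ hB₀ hφ

lemma CB.mechP_sum (x : 𝒳) (hblk : Function.Surjective blk) (hB₀ : 0 < B₀)
    (hα : ∀ ℓ, 0 < αl ℓ) : ∑ σ : 𝒥 → Bool, mechP blk αl B₀ φ x σ = 1 := by
  unfold mechP
  have hd : ∀ ℓ : 𝓛, 1 ≤ dl blk ℓ := by
    intro ℓ
    obtain ⟨j, hj⟩ := hblk ℓ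
    have : Nonempty (BlkT blk ℓ) := ⟨⟨j, hj⟩⟩
    exact Fintype.card_pos
  have h1 : ∑ σ : 𝒥 → Bool, ∏ ℓ : 𝓛, blockP blk αl B₀ φ x ℓ (fun j => σ j.1)
      = ∑ F : ∀ ℓ : 𝓛, BlkT blk ℓ → Bool, ∏ ℓ : 𝓛, blockP blk αl B₀ φ x ℓ (F ℓ) := by
    apply Fintype.sum_equiv (CB.blockEquiv blk)
    intro σ
    rfl
  rw [h1]
  have h2 := Finset.prod_univ_sum (fun ℓ : 𝓛 => (Finset.univ : Finset (BlkT blk ℓ → Bool)))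
    (fun ℓ h => blockP blk αl B₀ φ x ℓ h)
  rw [Fintype.piFinset_univ] at h2
  rw [← h2]
  apply Finset.prod_eq_one
  intro ℓ _
  exact CB.blockP_sum blk αl B₀ φ x ℓ hB₀ (hα ℓ) (hd ℓ)

lemma CB.isProb (x : 𝒳) (hblk : Function.Surjective blk) (hB₀ : 0 < B₀)
    (hα : ∀ ℓ, 0 < αl ℓ) (hφ : ∀ j x, |φ j x| ≤ B₀) :
    IsProbabilityMeasure (mechQ blk αl B₀ φ x) := by
  constructor
  unfold mechQ
  rw [Measure.finset_sum_apply]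
  simp only [Measure.smul_apply, smul_eq_mul, measure_univ, mul_one]
  rw [← ENNReal.ofReal_sum_of_nonneg (fun σ _ => CB.mechP_nonneg blk αl B₀ φ x σ hB₀ hφ)]
  rw [CB.mechP_sum blk αl B₀ φ x hblk hB₀ hα]
  exact ENNReal.ofReal_one

end MechLemmas

/-- Proposition 2.2 of the paper. For the Coordinate block
privacy mechanism with block privacy levels `0 < α_ℓ ≤ A`, every coordinate of
the private view satisfies, almost surely,
`|Z_j| ≤ 2 ξ_A B₀ √(d_ℓ)/α_ℓ` for `j` in block `ℓ`, and consequently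
`Var(Z_j) ≤ (2 ξ_A B₀)² d_ℓ / α_ℓ²`, where `ξ_A = A(e^A+1)/(e^A-1)`. -/

theorem coordinate_block_mechanism_bound_and_variance
    {𝒳 : Type*} [MeasurableSpace 𝒳]
    {𝒥 𝓛 : Type*} [Fintype 𝒥] [DecidableEq 𝒥] [Fintype 𝓛] [DecidableEq 𝓛]
    (blk : 𝒥 → 𝓛) (hblk : Function.Surjective blk)
    (A : ℝ) (hA : 0 < A)
    (αl : 𝓛 → ℝ) (hαl : ∀ ℓ, 0 < αl ℓ) (hαlA : ∀ ℓ, αl ℓ ≤ A)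
    (B₀ : ℝ) (hB₀ : 0 < B₀)
    (φ : 𝒥 → 𝒳 → ℝ) (hφ : ∀ j x, |φ j x| ≤ B₀) :
    ∀ (x : 𝒳) (ℓ : 𝓛) (j : 𝒥), blk j = ℓ →
      (∀ᵐ z ∂(mechQ blk αl B₀ φ x),
        |z j| ≤ 2 * xiA A * B₀ * Real.sqrt (dl blk ℓ) / αl ℓ) ∧
      variance (fun z => z j) (mechQ blk αl B₀ φ x)
        ≤ (2 * xiA A * B₀)^2 * (dl blk ℓ) / (αl ℓ)^2 := by
  intro x ℓ j hj
  set μ := mechQ blk αl B₀ φ x with hμ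
  set C := 2 * xiA A * B₀ * Real.sqrt (dl blk ℓ) / αl ℓ with hC
  have hd : 1 ≤ dl blk ℓ := by
    have : Nonempty (BlkT blk ℓ) := ⟨⟨j, hj⟩⟩
    exact Fintype.card_pos
  -- pointwise bound
  have hzb : ∀ σ : 𝒥 → Bool, |zOf blk αl B₀ σ j| ≤ C := by
    intro σ
    have h1 : |zOf blk αl B₀ σ j| = Bval blk αl B₀ ℓ := by
      unfold zOf
      rw [hj]
      have hBv : 0 ≤ Bval blk αl B₀ ℓ := (CB.Bk_pos (d := dl blk ℓ) hB₀ (hαl ℓ)).le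
      cases σ j <;> simp only [signVal, if_true, if_false, Bool.false_eq_true, abs_neg] <;>
        exact abs_of_nonneg hBv
    rw [h1]
    exact CB.Bk_le hB₀ (hαl ℓ) (hαlA ℓ) hd
  have hC0 : 0 ≤ C := le_trans (abs_nonneg _) (hzb fun _ => true)
  have hprob : IsProbabilityMeasure μ := CB.isProb blk αl B₀ φ x hblk hB₀ hαl hφ
  -- a.e. bound
  have hms : MeasurableSet {z : 𝒥 → ℝ | ¬ |z j| ≤ C} := by
    have h1 : Measurable fun z : 𝒥 → ℝ => |z j| := (measurable_pi_apply j).abs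
    have h2 : {z : 𝒥 → ℝ | ¬ |z j| ≤ C} = {z : 𝒥 → ℝ | C < |z j|} := by
      ext z; simp [not_le]
    rw [h2]
    exact measurableSet_lt measurable_const h1
  have hae : ∀ᵐ z ∂μ, |z j| ≤ C := by
    rw [ae_iff]
    rw [hμ]
    unfold mechQ
    rw [Measure.finset_sum_apply]
    refine Finset.sum_eq_zero fun σ _ => ?_
    rw [Measure.smul_apply, Measure.dirac_apply' _ hms]
    have : zOf blk αl B₀ σ ∉ {z : 𝒥 → ℝ | ¬ |z j| ≤ C} := by
      simp only [Set.mem_setOf_eq, not_not]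
      exact hzb σ
    rw [Set.indicator_of_notMem this]
    simp
  refine ⟨hae, ?_⟩
  -- variance bound
  have hmeas : AEStronglyMeasurable (fun z : 𝒥 → ℝ => z j) μ :=
    (measurable_pi_apply j).aestronglyMeasurable
  have hmem : MemLp (fun z : 𝒥 → ℝ => z j) 2 μ := by
    apply MemLp.of_bound hmeas C
    filter_upwards [hae] with z hz
    simpa [Real.norm_eq_abs] using hz
  have hvar := variance_eq_sub hmem
  rw [hvar]
  have hint2 : Integrable (fun z : 𝒥 → ℝ => (z j) ^ 2) μ := hmem.integrable_sq
  have hsq : ∫ z, ((fun z : 𝒥 → ℝ => z j) ^ 2) z ∂μ ≤ C ^ 2 := by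
    have hptle : ∀ᵐ z ∂μ, ((fun z : 𝒥 → ℝ => z j) ^ 2) z ≤ C ^ 2 := by
      filter_upwards [hae] with z hz
      simp only [Pi.pow_apply]
      have := abs_nonneg (z j)
      nlinarith [abs_le.mp hz, sq_abs (z j)]
    calc ∫ z, ((fun z : 𝒥 → ℝ => z j) ^ 2) z ∂μ ≤ ∫ _, C ^ 2 ∂μ := by
          apply integral_mono_ae _ (integrable_const _) hptle
          exact hint2
      _ = C ^ 2 := by simp [measure_univ]
  have hC2 : C ^ 2 = (2 * xiA A * B₀)^2 * (dl blk ℓ) / (αl ℓ)^2 := by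
    rw [hC]
    rw [div_pow, mul_pow, Real.sq_sqrt (Nat.cast_nonneg _)]
  calc ∫ z, ((fun z : 𝒥 → ℝ => z j) ^ 2) z ∂μ - (∫ z, z j ∂μ) ^ 2
      ≤ C ^ 2 := by nlinarith [sq_nonneg (∫ z, z j ∂μ), hsq]
    _ = (2 * xiA A * B₀)^2 * (dl blk ℓ) / (αl ℓ)^2 := hC2
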